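/- For γ ∈ (0,1), k ≥ 1, and p ≥ 0, the inequality (1-γ)^{k+1} Σ_{l=0}^{p} γ^l C(l+k,k) ≤ 1 - γ^{p+1} Σ_{r=0}^{k} (1-γ)^r γ^{k-r} C(k,r) holds, and the right-hand side equals 1 - γ^{p+1}. -/
import Mathlib


open Finset

private lemma key_id (γ : ℝ) (k : ℕ) : ∀ p : ℕ,
    (1 - γ) * ∑ l ∈ range (p + 1), γ ^ l * ((l + (k + 1)).choose (k + 1) : ℝ) =
      (∑ l ∈ range (p + 1), γ ^ l * ((l + k).choose k : ℝ)) -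
        γ ^ (p + 1) * ((p + k + 1).choose (k + 1) : ℝ) := by
  intro p
  induction p with
  | zero => simp [Nat.choose_self]
  | succ p ih =>
      rw [sum_range_succ _ (p + 1), sum_range_succ _ (p + 1), mul_add, ih]
      have pn : (p + 1 + (k + 1)).choose (k + 1) =
          (p + k + 1).choose (k + 1) + (p + 1 + k).choose k := by
        rw [show p + 1 + (k + 1) = (p + 1 + k) + 1 from by omega, Nat.choose_succ_succ,
          show p + 1 + k = p + k + 1 from by omega, Nat.add_comm]
      have pascal : ((p + 1 + (k + 1)).choose (k + 1) : ℝ) =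
          ((p + k + 1).choose (k + 1) : ℝ) + ((p + 1 + k).choose k : ℝ) := by
        exact_mod_cast pn
      have pascal2 : ((p + 1 + k + 1).choose (k + 1) : ℝ) =
          ((p + k + 1).choose (k + 1) : ℝ) + ((p + 1 + k).choose k : ℝ) := pascal
      rw [pascal, pascal2]
      ring

private lemma main_ineq (γ : ℝ) (hγ0 : 0 < γ) (hγ1 : γ < 1) : ∀ k p : ℕ,
    (1 - γ) ^ (k + 1) * ∑ l ∈ range (p + 1), γ ^ l * ((l + k).choose k : ℝ) ≤
      1 - γ ^ (p + 1) := by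
  intro k
  induction k with
  | zero =>
      intro p
      have : (∑ l ∈ range (p + 1), γ ^ l * ((l + 0).choose 0 : ℝ)) =
          ∑ l ∈ range (p + 1), γ ^ l := by simp
      rw [this, pow_one]
      have := geom_sum_mul γ (p + 1)
      nlinarith [this]
  | succ k ih =>
      intro p
      have hkey := key_id γ k p
      have h1γ : (0:ℝ) < 1 - γ := by linarith
      have hpow : (0:ℝ) ≤ (1 - γ) ^ (k + 1) := by positivity
      have hnn : (0:ℝ) ≤ γ ^ (p + 1) * ((p + k + 1).choose (k + 1) : ℝ) := by positivity
      calc (1 - γ) ^ (k + 1 + 1) * ∑ l ∈ range (p + 1), γ ^ l * ((l + (k + 1)).choose (k + 1) : ℝ)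
          = (1 - γ) ^ (k + 1) *
            ((1 - γ) * ∑ l ∈ range (p + 1), γ ^ l * ((l + (k + 1)).choose (k + 1) : ℝ)) := by ring
        _ = (1 - γ) ^ (k + 1) *
            ((∑ l ∈ range (p + 1), γ ^ l * ((l + k).choose k : ℝ)) -
              γ ^ (p + 1) * ((p + k + 1).choose (k + 1) : ℝ)) := by rw [hkey]
        _ ≤ (1 - γ) ^ (k + 1) * ∑ l ∈ range (p + 1), γ ^ l * ((l + k).choose k : ℝ) := by
            nlinarith
        _ ≤ 1 - γ ^ (p + 1) := ih p

theorem stmt2 (γ : ℝ) (hγ0 : 0 < γ) (hγ1 : γ < 1) (k p : ℕ) (hk : 1 ≤ k) :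
    ((1 - γ) ^ (k + 1) * ∑ l ∈ range (p + 1), γ ^ l * ((l + k).choose k : ℝ) ≤
        1 - γ ^ (p + 1) * ∑ r ∈ range (k + 1), (1 - γ) ^ r * γ ^ (k - r) * (k.choose r : ℝ)) ∧
      1 - γ ^ (p + 1) * ∑ r ∈ range (k + 1), (1 - γ) ^ r * γ ^ (k - r) * (k.choose r : ℝ) =
        1 - γ ^ (p + 1) := by
  have hsum : (∑ r ∈ range (k + 1), (1 - γ) ^ r * γ ^ (k - r) * (k.choose r : ℝ)) = 1 := by
    have := add_pow (1 - γ) γ k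
    simp at this
    rw [← this]
  constructor
  · rw [hsum, mul_one]
    exact main_ineq γ hγ0 hγ1 k p
  · rw [hsum, mul_one]
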